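/- (Vaccination cannot increase SIR extent.) In the discrete-time SIR model, vaccinating a set W of nodes—modeled as setting their removal probability to 1 (equivalently, they never transmit), or as removing them from the susceptible pool—never increases the mean final extent among the remaining nodes: the expected number of ultimately infected nodes in V \ W with vaccination is at most the expected number of ultimately infected nodes in V \ W without vaccination. -/

import Mathlib

open Finset

/-- A full assignment of random coins for the epidemic: initial-infection coins,
removal coins, and per-(ordered-)edge transmission coins. -/
abbrev Coins (V : Type*) := (V → Bool) × (V → Bool) × (V → V → Bool)

variable {V : Type*} [Fintype V] [DecidableEq V]

/-- Probability weight of a coin outcome `ω` under induction probabilities `σ`,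
removal probabilities `γ` and transmission probabilities `τ`. -/
def coinWeight (σ γ : V → ℝ) (τ : V → V → ℝ) (ω : Coins V) : ℝ :=
  (∏ v, if ω.1 v then σ v else 1 - σ v) *
  (∏ v, if ω.2.1 v then γ v else 1 - γ v) *
  ∏ u, ∏ v, if ω.2.2 u v then τ u v else 1 - τ u v

/-- One step of the discrete-time SIR process: state is `(I, R)`.
An infected node, unless removed (removal coin `true`), transmits to each
susceptible out-neighbour whose transmission coin is `true`; then it recovers. -/
def sirStep (A : V → V → Bool) (ω : Coins V) (p : Finset V × Finset V) :
    Finset V × Finset V :=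
  (univ.filter (fun v => v ∉ p.1 ∧ v ∉ p.2 ∧
      ∃ u ∈ p.1, ω.2.1 u = false ∧ A u v = true ∧ ω.2.2 u v = true),
   p.2 ∪ p.1)

/-- The discrete-time SIR process `(I_t, R_t)`; susceptibles are the complement. -/
def sirProc (A : V → V → Bool) (ω : Coins V) : ℕ → Finset V × Finset V
  | 0 => (univ.filter (fun v => ω.1 v = true), ∅)
  | t + 1 => sirStep A ω (sirProc A ω t)

/-- The set of ever-infected nodes (the epidemic is stationary by time `n = |V|`). -/
def everInf (A : V → V → Bool) (ω : Coins V) : Finset V :=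
  (sirProc A ω (Fintype.card V)).1 ∪ (sirProc A ω (Fintype.card V)).2

/-- The mean final extent `E(|R_n|)` of the SIR epidemic. -/
def meanExtent (A : V → V → Bool) (σ γ : V → ℝ) (τ : V → V → ℝ) : ℝ :=
  ∑ ω : Coins V, coinWeight σ γ τ ω * ((everInf A ω).card : ℝ)

/-- The probability that node `u` is ultimately infected. -/
def probInf (A : V → V → Bool) (σ γ : V → ℝ) (τ : V → V → ℝ) (u : V) : ℝ :=
  ∑ ω : Coins V, coinWeight σ γ τ ω * (if u ∈ everInf A ω then 1 else 0)

/-- The expected number of ultimately infected nodes belonging to the set `D`. -/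
def meanExtentOn (A : V → V → Bool) (σ γ : V → ℝ) (τ : V → V → ℝ) (D : Finset V) : ℝ :=
  ∑ ω : Coins V, coinWeight σ γ τ ω * (((everInf A ω) ∩ D).card : ℝ)

/-!
Both models live on one coin space: vaccinating `W` amounts to forcing the removal coins of `W`
to `true`, and forcing coordinates of a product Bernoulli law with parameters `γ` yields the
product law with `γ` replaced by `1` on `W`. With more removal coins, every transmission of the
modified epidemic is also a transmission of the original one, possibly at an earlier time, so for
each coin outcome the ever-infected set can only shrink.
-/

theorem sum_prod_mul_comp_eq {ι α β R : Type*} [Fintype ι] [DecidableEq ι] [CommSemiring R]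
    [Fintype α] [Fintype β] [DecidableEq β]
    (f : ι → α → R) (g : ι → α → β) (h : (ι → β) → R) :
    ∑ x : ι → α, (∏ i, f i (x i)) * h (fun i => g i (x i))
      = ∑ y : ι → β, (∏ i, ∑ a with g i a = y i, f i a) * h y := by
  rw [← Finset.sum_fiberwise univ (fun x i => g i (x i))]
  refine sum_congr rfl fun y _ => ?_
  have hfiber : univ.filter (fun x : ι → α => (fun i => g i (x i)) = y)
      = Fintype.piFinset fun i => univ.filter (fun a => g i a = y i) := by
    ext x
    simp [Fintype.mem_piFinset, funext_iff]
  rw [prod_univ_sum, ← hfiber, sum_mul]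
  exact sum_congr rfl fun x hx => by rw [(mem_filter.1 hx).2]

section Bernoulli

variable {ι : Type*} [Fintype ι]

def bernoulliWeight (p : ι → ℝ) (x : ι → Bool) : ℝ :=
  ∏ i, if x i then p i else 1 - p i

theorem bernoulliWeight_nonneg {p : ι → ℝ} (hp : ∀ i, 0 ≤ p i ∧ p i ≤ 1) (x : ι → Bool) :
    0 ≤ bernoulliWeight p x :=
  prod_nonneg fun i _ => by split <;> linarith [hp i]

theorem sum_bernoulliWeight_force [DecidableEq ι] (p : ι → ℝ) (W : Finset ι)
    (h : (ι → Bool) → ℝ) :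
    ∑ x, bernoulliWeight (fun i => if i ∈ W then 1 else p i) x * h x
      = ∑ x, bernoulliWeight p x * h (fun i => if i ∈ W then true else x i) := by
  symm
  refine (sum_prod_mul_comp_eq (fun i (b : Bool) => if b then p i else 1 - p i)
    (fun i b => if i ∈ W then true else b) h).trans ?_
  refine sum_congr rfl fun x _ => congrArg (· * h x) (prod_congr rfl fun i _ => ?_)
  by_cases hi : i ∈ W <;> cases x i <;> simp [hi, Finset.sum_filter]

theorem coinWeight_eq (σ γ : ι → ℝ) (τ : ι → ι → ℝ) (ω : Coins ι) :
    coinWeight σ γ τ ω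
      = bernoulliWeight σ ω.1 * bernoulliWeight γ ω.2.1 * ∏ u, bernoulliWeight (τ u) (ω.2.2 u) :=
  rfl

theorem coinWeight_nonneg {σ γ : ι → ℝ} {τ : ι → ι → ℝ}
    (hσ : ∀ v, 0 ≤ σ v ∧ σ v ≤ 1) (hγ : ∀ v, 0 ≤ γ v ∧ γ v ≤ 1)
    (hτ : ∀ u v, 0 ≤ τ u v ∧ τ u v ≤ 1) (ω : Coins ι) :
    0 ≤ coinWeight σ γ τ ω :=
  mul_nonneg (mul_nonneg (bernoulliWeight_nonneg hσ _) (bernoulliWeight_nonneg hγ _))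
    (prod_nonneg fun u _ => bernoulliWeight_nonneg (hτ u) _)

end Bernoulli

theorem sum_coinWeight_mul (σ γ : V → ℝ) (τ : V → V → ℝ) (f : Coins V → ℝ) :
    ∑ ω, coinWeight σ γ τ ω * f ω
      = ∑ a, ∑ c, bernoulliWeight γ c *
          ∑ e, bernoulliWeight σ a * (∏ u, bernoulliWeight (τ u) (e u)) * f (a, c, e) := by
  simp only [Fintype.sum_prod_type, mul_sum, coinWeight_eq]
  refine sum_congr rfl fun a _ => sum_congr rfl fun c _ => sum_congr rfl fun e _ => ?_
  ring

theorem sum_coinWeight_force (σ γ : V → ℝ) (τ : V → V → ℝ) (W : Finset V)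
    (f : Coins V → ℝ) :
    ∑ ω, coinWeight σ (fun v => if v ∈ W then 1 else γ v) τ ω * f ω
      = ∑ ω, coinWeight σ γ τ ω * f (ω.1, fun v => if v ∈ W then true else ω.2.1 v, ω.2.2) := by
  rw [sum_coinWeight_mul, sum_coinWeight_mul]
  exact sum_congr rfl fun a _ => sum_bernoulliWeight_force γ W _


def everInfAt (A : V → V → Bool) (ω : Coins V) (t : ℕ) : Finset V :=
  (sirProc A ω t).1 ∪ (sirProc A ω t).2

section Epidemic

variable (A : V → V → Bool) (ω : Coins V)

theorem sirProc_succ_snd (t : ℕ) : (sirProc A ω (t + 1)).2 = everInfAt A ω t :=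
  union_comm _ _

theorem mem_sirProc_succ_fst {t : ℕ} {v : V} :
    v ∈ (sirProc A ω (t + 1)).1 ↔ v ∉ everInfAt A ω t ∧
      ∃ u ∈ (sirProc A ω t).1, ω.2.1 u = false ∧ A u v = true ∧ ω.2.2 u v = true := by
  simp [sirProc, sirStep, everInfAt, and_assoc]

theorem everInfAt_succ (t : ℕ) :
    everInfAt A ω (t + 1) = (sirProc A ω (t + 1)).1 ∪ everInfAt A ω t := by
  rw [everInfAt, sirProc_succ_snd]

theorem everInfAt_mono : Monotone (everInfAt A ω) :=
  monotone_nat_of_le_succ fun t => (everInfAt_succ A ω t).symm ▸ subset_union_right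

variable {A ω}

theorem mem_everInfAt_succ_of_infected_transmits {t : ℕ} {u v : V}
    (hu : u ∈ (sirProc A ω t).1) (hc : ω.2.1 u = false) (hA : A u v = true)
    (he : ω.2.2 u v = true) : v ∈ everInfAt A ω (t + 1) := by
  by_cases hv : v ∈ everInfAt A ω t
  · exact everInfAt_mono A ω t.le_succ hv
  · rw [everInfAt_succ]
    exact mem_union_left _ ((mem_sirProc_succ_fst A ω).2 ⟨hv, u, hu, hc, hA, he⟩)

theorem mem_everInfAt_succ_of_transmits {t : ℕ} {u v : V} (hu : u ∈ everInfAt A ω t)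
    (hc : ω.2.1 u = false) (hA : A u v = true) (he : ω.2.2 u v = true) :
    v ∈ everInfAt A ω (t + 1) := by
  induction t with
  | zero =>
    have hI : u ∈ (sirProc A ω 0).1 := by simpa [everInfAt, sirProc] using hu
    exact mem_everInfAt_succ_of_infected_transmits hI hc hA he
  | succ t ih =>
    rcases mem_union.1 hu with hI | hR
    · exact mem_everInfAt_succ_of_infected_transmits hI hc hA he
    · rw [sirProc_succ_snd] at hR
      exact everInfAt_mono A ω (t + 1).le_succ (ih hR)

end Epidemic

theorem everInfAt_subset_of_le (A : V → V → Bool) (a : V → Bool) (e : V → V → Bool)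
    {c c' : V → Bool} (hc : c ≤ c') (t : ℕ) :
    everInfAt A (a, c', e) t ⊆ everInfAt A (a, c, e) t := by
  induction t with
  | zero => exact Subset.rfl
  | succ t ih =>
    rw [everInfAt_succ]
    refine union_subset (fun v hv => ?_) (ih.trans (everInfAt_mono A _ t.le_succ))
    obtain ⟨-, u, hu, hc'u, hA, he⟩ := (mem_sirProc_succ_fst A _).1 hv
    have hcu : c u = false := Bool.eq_false_of_le_false (hc'u ▸ hc u)
    exact mem_everInfAt_succ_of_transmits (ih (mem_union_left _ hu)) hcu hA he

/-- **vaccination cannot increase SIR extent.** Vaccinating a set `W`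
of nodes — modelled by setting their removal probability to `1`, so that they are
removed immediately upon infection and never transmit — never increases the
expected number of ultimately infected nodes among the remaining nodes `V \ W`. -/
theorem sir_vaccination_cannot_increase_extent {V : Type*} [Fintype V] [DecidableEq V]
    (A : V → V → Bool) (σ γ : V → ℝ) (τ : V → V → ℝ) (W : Finset V)
    (hσ : ∀ v, 0 ≤ σ v ∧ σ v ≤ 1) (hγ : ∀ v, 0 ≤ γ v ∧ γ v ≤ 1)
    (hτ : ∀ u v, 0 ≤ τ u v ∧ τ u v ≤ 1) :
    meanExtentOn A σ (fun v => if v ∈ W then 1 else γ v) τ (Finset.univ \ W)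
      ≤ meanExtentOn A σ γ τ (Finset.univ \ W) := by
  unfold meanExtentOn
  rw [sum_coinWeight_force]
  gcongr with ω
  · exact coinWeight_nonneg hσ hγ hτ ω
  · refine everInfAt_subset_of_le A ω.1 ω.2.2 (fun v => ?_) _
    split_ifs <;> simp
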